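/- arXiv:2307.05170 — 2 statements merged into one kernel-verified Lean document; each statement's English description precedes it below -/
import Mathlib

section
/- Let d ≥ 1, let α ∈ (0,∞)^d be a location parameter, let τ > 0 be a temperature, and let G_1,…,G_d be i.i.d. real random variables with the standard Gumbel distribution. Define the concrete random variable X with coordinates X_k = exp((log α_k + G_k)/τ) / Σ_{i=1}^d exp((log α_i + G_i)/τ). Then for every k ∈ {1,…,d}, the probability that X_k > X_i for all i ≠ k equals α_k / Σ_{i=1}^d α_i. (Proposition 1, part 1: rounding property.) -/
/-!
Shifting the Gumbel variables to `Y i = log (α i) + G i`, the event `X i < X k` becomes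
`Y i < Y k`, and `Y i` is Gumbel with CDF `exp (-(α i * exp (-x)))`. These CDFs multiply by adding
the parameters, so the maximum of the `Y i` with `i ≠ k` is again Gumbel, with parameter
`A = ∑ i ≠ k, α i`. By independence the probability in question is `∫ F_A dμ_k`, and since the
density of `μ_k` times `F_A` is `α k / (α k + A)` times the density of the Gumbel law with
parameter `α k + A`, the integral equals `α k / ∑ i, α i`.
-/

open MeasureTheory ProbabilityTheory Real Filter Set Finset

namespace ProbabilityTheory

/-- CDF of the Gumbel law with location `log a` and scale `1`. -/
noncomputable def gumbelCDF (a x : ℝ) : ℝ := exp (-(a * exp (-x)))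

noncomputable def gumbelPDF (a x : ℝ) : ℝ := a * exp (-x) * gumbelCDF a x

noncomputable def gumbelMeasure (a : ℝ) : Measure ℝ :=
  volume.withDensity fun x => ENNReal.ofReal (gumbelPDF a x)

lemma gumbelCDF_eq_exp_neg_exp_sub_log {a : ℝ} (ha : 0 < a) (x : ℝ) :
    gumbelCDF a x = exp (-exp (-(x - log a))) := by
  rw [gumbelCDF, neg_sub, sub_eq_add_neg, exp_add, exp_log ha]

lemma gumbelCDF_nonneg (a x : ℝ) : 0 ≤ gumbelCDF a x := (exp_pos _).le

lemma gumbelPDF_nonneg {a : ℝ} (ha : 0 ≤ a) (x : ℝ) : 0 ≤ gumbelPDF a x := by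
  unfold gumbelPDF gumbelCDF; positivity

lemma continuous_gumbelCDF (a : ℝ) : Continuous (gumbelCDF a) := by
  unfold gumbelCDF; fun_prop

lemma continuous_gumbelPDF (a : ℝ) : Continuous (gumbelPDF a) := by
  unfold gumbelPDF gumbelCDF; fun_prop

lemma gumbelCDF_mul_gumbelCDF (a b x : ℝ) :
    gumbelCDF a x * gumbelCDF b x = gumbelCDF (a + b) x := by
  simp only [gumbelCDF, ← exp_add]
  ring_nf

lemma prod_gumbelCDF {ι : Type*} (s : Finset ι) (a : ι → ℝ) (x : ℝ) :
    ∏ i ∈ s, gumbelCDF (a i) x = gumbelCDF (∑ i ∈ s, a i) x := by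
  simp only [gumbelCDF, ← exp_sum, sum_mul, sum_neg_distrib]

lemma gumbelPDF_mul_gumbelCDF {a b : ℝ} (hab : a + b ≠ 0) (x : ℝ) :
    gumbelPDF a x * gumbelCDF b x = a / (a + b) * gumbelPDF (a + b) x := by
  rw [gumbelPDF, gumbelPDF, mul_assoc, gumbelCDF_mul_gumbelCDF]
  field_simp

lemma hasDerivAt_gumbelCDF (a x : ℝ) : HasDerivAt (gumbelCDF a) (gumbelPDF a x) x := by
  refine (((hasDerivAt_neg x).exp.const_mul a).neg).exp.congr_deriv ?_
  unfold gumbelPDF gumbelCDF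
  simp only [Pi.neg_apply]
  ring

lemma tendsto_gumbelCDF_atBot {a : ℝ} (ha : 0 < a) : Tendsto (gumbelCDF a) atBot (nhds 0) :=
  tendsto_exp_atBot.comp <| tendsto_neg_atTop_atBot.comp <|
    (tendsto_exp_atTop.comp tendsto_neg_atBot_atTop).const_mul_atTop ha

lemma tendsto_gumbelCDF_atTop (a : ℝ) : Tendsto (gumbelCDF a) atTop (nhds 1) := by
  have h : Tendsto (fun x => -(a * exp (-x))) atTop (nhds (-(a * 0))) :=
    ((tendsto_exp_atBot.comp tendsto_neg_atTop_atBot).const_mul a).neg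
  rw [show (1 : ℝ) = exp (-(a * 0)) by simp]
  exact (continuous_exp.tendsto _).comp h

lemma integrableOn_gumbelPDF_Iic {a : ℝ} (ha : 0 ≤ a) (b : ℝ) :
    IntegrableOn (gumbelPDF a) (Iic b) := by
  refine integrableOn_Iic_of_intervalIntegral_norm_bounded (gumbelCDF a b) b
    (a := fun n : ℕ => b - n) (l := atTop)
    (fun _ => (continuous_gumbelPDF a).integrableOn_Ioc) ?_ (Eventually.of_forall fun n => ?_)
  · exact tendsto_atBot_add_const_left atTop b
      (tendsto_neg_atTop_atBot.comp tendsto_natCast_atTop_atTop)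
  · have hnorm : ∀ x, ‖gumbelPDF a x‖ = gumbelPDF a x :=
      fun x => norm_of_nonneg (gumbelPDF_nonneg ha x)
    simp only [hnorm]
    rw [intervalIntegral.integral_eq_sub_of_hasDerivAt (fun x _ => hasDerivAt_gumbelCDF a x)
      ((continuous_gumbelPDF a).intervalIntegrable _ _)]
    linarith [gumbelCDF_nonneg a (b - n)]

lemma integral_gumbelPDF_Iic {a : ℝ} (ha : 0 < a) (b : ℝ) :
    ∫ x in Iic b, gumbelPDF a x = gumbelCDF a b := by
  simpa using integral_Iic_of_hasDerivAt_of_tendsto' (fun x _ => hasDerivAt_gumbelCDF a x)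
    (integrableOn_gumbelPDF_Iic ha.le b) (tendsto_gumbelCDF_atBot ha)

lemma integrable_gumbelPDF {a : ℝ} (ha : 0 < a) : Integrable (gumbelPDF a) := by
  rw [← integrableOn_univ, ← Iic_union_Ioi (a := (0 : ℝ))]
  exact (integrableOn_gumbelPDF_Iic ha.le 0).union
    (integrableOn_Ioi_deriv_of_nonneg' (fun x _ => hasDerivAt_gumbelCDF a x)
      (fun x _ => gumbelPDF_nonneg ha.le x) (tendsto_gumbelCDF_atTop a))

lemma integral_gumbelPDF {a : ℝ} (ha : 0 < a) : ∫ x, gumbelPDF a x = 1 := by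
  simpa using integral_of_hasDerivAt_of_tendsto (hasDerivAt_gumbelCDF a)
    (integrable_gumbelPDF ha) (tendsto_gumbelCDF_atBot ha) (tendsto_gumbelCDF_atTop a)

lemma gumbelMeasure_Iic {a : ℝ} (ha : 0 < a) (b : ℝ) :
    gumbelMeasure a (Iic b) = ENNReal.ofReal (gumbelCDF a b) := by
  rw [gumbelMeasure, withDensity_apply _ measurableSet_Iic,
    ← ofReal_integral_eq_lintegral_ofReal (integrableOn_gumbelPDF_Iic ha.le b)
      (ae_of_all _ (gumbelPDF_nonneg ha.le)), integral_gumbelPDF_Iic ha]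

lemma gumbelMeasure_Iio {a : ℝ} (ha : 0 < a) (b : ℝ) :
    gumbelMeasure a (Iio b) = ENNReal.ofReal (gumbelCDF a b) := by
  rw [← gumbelMeasure_Iic ha, gumbelMeasure, withDensity_apply _ measurableSet_Iio,
    withDensity_apply _ measurableSet_Iic, setLIntegral_congr Iio_ae_eq_Iic]

/-- For independent `Y ~ gumbelMeasure a` and `Y' ~ gumbelMeasure b`, this is `P(Y' < Y)`. -/
lemma lintegral_gumbelCDF_gumbelMeasure {a b : ℝ} (ha : 0 < a) (hb : 0 ≤ b) :
    ∫⁻ x, ENNReal.ofReal (gumbelCDF b x) ∂gumbelMeasure a = ENNReal.ofReal (a / (a + b)) := by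
  have hab : 0 < a + b := by linarith
  have hint : Integrable fun x => a / (a + b) * gumbelPDF (a + b) x :=
    (integrable_gumbelPDF hab).const_mul _
  rw [gumbelMeasure, lintegral_withDensity_eq_lintegral_mul _
    (continuous_gumbelPDF a).measurable.ennreal_ofReal
    (continuous_gumbelCDF b).measurable.ennreal_ofReal]
  calc ∫⁻ x, ENNReal.ofReal (gumbelPDF a x) * ENNReal.ofReal (gumbelCDF b x)
      = ∫⁻ x, ENNReal.ofReal (a / (a + b) * gumbelPDF (a + b) x) := by
        refine lintegral_congr fun x => ?_
        rw [← ENNReal.ofReal_mul (gumbelPDF_nonneg ha.le x), gumbelPDF_mul_gumbelCDF hab.ne']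
    _ = ENNReal.ofReal (a / (a + b)) := by
        rw [← ofReal_integral_eq_lintegral_ofReal hint (ae_of_all _ fun x =>
          mul_nonneg (div_nonneg ha.le hab.le) (gumbelPDF_nonneg hab.le x)),
          integral_const_mul, integral_gumbelPDF hab, mul_one]

variable {Ω : Type*} [MeasurableSpace Ω] {μ : Measure Ω} [IsFiniteMeasure μ]

lemma map_eq_gumbelMeasure {Y : Ω → ℝ} (hY : Measurable Y) {a : ℝ} (ha : 0 < a)
    (hcdf : ∀ x, μ {ω | Y ω ≤ x} = ENNReal.ofReal (gumbelCDF a x)) :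
    μ.map Y = gumbelMeasure a :=
  Measure.ext_of_Iic _ _ fun x => by
    rw [Measure.map_apply hY measurableSet_Iic, gumbelMeasure_Iic ha, ← hcdf]
    rfl

lemma measure_forall_lt_eq_lintegral_prod {ι : Type*} [Fintype ι] [DecidableEq ι]
    {Y : ι → Ω → ℝ} (hY : ∀ i, Measurable (Y i)) (hindep : iIndepFun Y μ) (k : ι) :
    μ {ω | ∀ i, i ≠ k → Y i ω < Y k ω} =
      ∫⁻ x, ∏ i ∈ univ.erase k, μ {ω | Y i ω < x} ∂μ.map (Y k) := by
  set T := univ.erase k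
  let W : Ω → T → ℝ := fun ω i => Y i ω
  have hW : Measurable W := measurable_pi_lambda _ fun i => hY i
  have hYW : IndepFun (Y k) W μ :=
    (hindep.indepFun_finset {k} T (by simp [T]) hY).comp
      (φ := fun v : ({k} : Finset ι) → ℝ => v ⟨k, mem_singleton_self k⟩) (ψ := id)
      (measurable_pi_apply (X := fun _ => ℝ) _) measurable_id
  let U : Set (ℝ × (T → ℝ)) := {p | ∀ i, p.2 i < p.1}
  have hU : MeasurableSet U := by
    simp only [U, ofPred_forall]
    exact .iInter fun i => measurableSet_lt measurable_snd.eval measurable_fst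
  have hevent : {ω | ∀ i, i ≠ k → Y i ω < Y k ω} = (fun ω => (Y k ω, W ω)) ⁻¹' U := by
    ext ω
    simp [U, W, T]
  have hslice : ∀ x, μ.map W (Prod.mk x ⁻¹' U) = ∏ i ∈ T, μ {ω | Y i ω < x} := fun x => by
    have hpre : W ⁻¹' (Prod.mk x ⁻¹' U) = ⋂ i ∈ T, Y i ⁻¹' Iio x := by
      ext ω
      simp [U, W]
    rw [Measure.map_apply hW (measurable_prodMk_left hU), hpre,
      hindep.meas_biInter fun i _ => ⟨Iio x, measurableSet_Iio, rfl⟩]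
    rfl
  rw [hevent, ← Measure.map_apply ((hY k).prodMk hW) hU,
    (indepFun_iff_map_prod_eq_prod_map_map (hY k).aemeasurable hW.aemeasurable).mp hYW,
    Measure.prod_apply hU]
  simp only [hslice]

theorem measure_forall_lt_of_gumbel {ι : Type*} [Fintype ι] [DecidableEq ι]
    {Y : ι → Ω → ℝ} (hY : ∀ i, Measurable (Y i)) (hindep : iIndepFun Y μ)
    {α : ι → ℝ} (hα : ∀ i, 0 < α i) (hlaw : ∀ i, μ.map (Y i) = gumbelMeasure (α i)) (k : ι) :
    μ {ω | ∀ i, i ≠ k → Y i ω < Y k ω} = ENNReal.ofReal (α k / ∑ i, α i) := by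
  have hlt : ∀ i x, μ {ω | Y i ω < x} = ENNReal.ofReal (gumbelCDF (α i) x) := fun i x => by
    rw [← gumbelMeasure_Iio (hα i), ← hlaw i, Measure.map_apply (hY i) measurableSet_Iio]
    rfl
  simp only [measure_forall_lt_eq_lintegral_prod hY hindep k, hlt, hlaw k,
    ← ENNReal.ofReal_prod_of_nonneg fun i _ => gumbelCDF_nonneg _ _, prod_gumbelCDF]
  rw [lintegral_gumbelCDF_gumbelMeasure (hα k) (sum_nonneg fun i _ => (hα i).le),
    add_sum_erase _ _ (mem_univ k)]

end ProbabilityTheory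

lemma exp_div_sum_exp_lt_exp_div_sum_exp_iff {ι : Type*} [Fintype ι] {y : ι → ℝ} {τ : ℝ}
    (hτ : 0 < τ) (i k : ι) :
    exp (y i / τ) / ∑ j, exp (y j / τ) < exp (y k / τ) / ∑ j, exp (y j / τ) ↔ y i < y k := by
  have hsum : 0 < ∑ j, exp (y j / τ) := sum_pos (fun j _ => exp_pos _) ⟨i, mem_univ i⟩
  rw [div_lt_div_iff_of_pos_right hsum, exp_lt_exp, div_lt_div_iff_of_pos_right hτ]

theorem concrete_rounding_general
    {Ω : Type*} [MeasureSpace Ω] [IsProbabilityMeasure (ℙ : Measure Ω)]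
    (d : ℕ)
    (α : Fin d → ℝ) (hα : ∀ i, 0 < α i)
    (τ : ℝ) (hτ : 0 < τ)
    (G : Fin d → Ω → ℝ)
    (hGmeas : ∀ i, Measurable (G i))
    (hGindep : iIndepFun (m := fun _ => Real.measurableSpace) G ℙ)
    (hGcdf : ∀ i x, ℙ {ω | G i ω ≤ x} = ENNReal.ofReal (Real.exp (-Real.exp (-x))))
    (X : Fin d → Ω → ℝ)
    (hX : ∀ k ω, X k ω =
      Real.exp ((Real.log (α k) + G k ω) / τ) /
        ∑ i, Real.exp ((Real.log (α i) + G i ω) / τ))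
    (k : Fin d) :
    ℙ {ω | ∀ i, i ≠ k → X i ω < X k ω} = ENNReal.ofReal (α k / ∑ i, α i) := by
  let Y : Fin d → Ω → ℝ := fun i ω => log (α i) + G i ω
  have hY : ∀ i, Measurable (Y i) := fun i => measurable_const.add (hGmeas i)
  have hevent : {ω | ∀ i, i ≠ k → X i ω < X k ω} = {ω | ∀ i, i ≠ k → Y i ω < Y k ω} := by
    ext ω
    simp only [mem_ofPred_eq, hX]
    exact forall₂_congr fun i _ =>
      exp_div_sum_exp_lt_exp_div_sum_exp_iff (y := fun j => Y j ω) hτ i k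
  have hlaw : ∀ i, (ℙ : Measure Ω).map (Y i) = gumbelMeasure (α i) := fun i =>
    map_eq_gumbelMeasure (hY i) (hα i) fun x => by
      rw [gumbelCDF_eq_exp_neg_exp_sub_log (hα i), ← hGcdf i]
      simp only [Y, ← le_sub_iff_add_le']
  rw [hevent]
  exact measure_forall_lt_of_gumbel hY
    (hGindep.comp _ fun i => measurable_const.add measurable_id) hα hlaw k

/-- **Proposition 1, part 1 (rounding property of the concrete random variable).**
Let `α ∈ (0,∞)^d` be a location parameter, `τ > 0` a temperature, and `G 1, …, G d`
i.i.d. standard Gumbel random variables (CDF `x ↦ exp (-exp (-x))`).  The concrete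
random variable `X` has coordinates
`X k = exp ((log (α k) + G k)/τ) / ∑ i, exp ((log (α i) + G i)/τ)`.
Then for every `k`, the probability that `X k > X i` for all `i ≠ k` equals
`α k / ∑ i, α i`. -/
theorem concrete_rounding
    {Ω : Type*} [MeasureSpace Ω] [IsProbabilityMeasure (ℙ : Measure Ω)]
    (d : ℕ) (hd : 1 ≤ d)
    (α : Fin d → ℝ) (hα : ∀ i, 0 < α i)
    (τ : ℝ) (hτ : 0 < τ)
    (G : Fin d → Ω → ℝ)
    (hGmeas : ∀ i, Measurable (G i))
    (hGindep : iIndepFun (m := fun _ => Real.measurableSpace) G ℙ)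
    (hGcdf : ∀ i x, ℙ {ω | G i ω ≤ x} = ENNReal.ofReal (Real.exp (-Real.exp (-x))))
    (X : Fin d → Ω → ℝ)
    (hX : ∀ k ω, X k ω =
      Real.exp ((Real.log (α k) + G k ω) / τ) /
        ∑ i, Real.exp ((Real.log (α i) + G i ω) / τ))
    (k : Fin d) :
    ℙ {ω | ∀ i, i ≠ k → X i ω < X k ω} = ENNReal.ofReal (α k / ∑ i, α i) :=
  concrete_rounding_general d α hα τ hτ G hGmeas hGindep hGcdf X hX k
end

section
/- Let d ≥ 1, let α ∈ (0,∞)^d, let G_1,…,G_d be i.i.d. real random variables with the standard Gumbel distribution, and for each τ > 0 let X(τ) be the concrete random variable with coordinates X_k(τ) = exp((log α_k + G_k)/τ) / Σ_{i=1}^d exp((log α_i + G_i)/τ). Let f : ℝ^d → ℝ be continuous. Then almost surely the index K maximizing log α_i + G_i is unique, and lim_{τ→0⁺} f(X(τ)) = f(e_K), where e_K is the one-hot vector at index K; in particular f(X(τ)) converges almost surely (hence in probability) as τ → 0⁺ to f applied to the rounding of X. (Convergence of the Gumbel-Softmax reparameterized objective to the empirical estimator as the temperature tends to zero.) -/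
open MeasureTheory ProbabilityTheory Real Filter Topology

/-!
Since the Gumbel law is atomless and the `G i` are independent, the scores `log (α i) + G i`
are almost surely pairwise distinct, so almost surely they have a unique strict maximizer `K`.
For fixed scores `y` with strict maximizer `K`, dividing numerator and denominator of the
softmax by `exp (y K / τ)` leaves `exp ((y k - y K) / τ)`, which tends to `0` for `k ≠ K`
and equals `1` for `k = K`; continuity of `f` finishes the argument.
-/

lemma tendsto_exp_div_nhdsGT_zero_of_neg {z : ℝ} (hz : z < 0) :
    Tendsto (fun τ : ℝ => exp (z / τ)) (𝓝[>] 0) (𝓝 0) := by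
  have hdiv : Tendsto (fun τ : ℝ => z / τ) (𝓝[>] 0) atBot := by
    simpa only [div_eq_mul_inv] using
      (tendsto_const_mul_atBot_of_neg hz).mpr tendsto_inv_nhdsGT_zero
  exact tendsto_exp_atBot.comp hdiv

lemma tendsto_softmax_nhdsGT_zero {ι : Type*} [Fintype ι] [DecidableEq ι]
    (y : ι → ℝ) (K : ι) (hK : ∀ i, i ≠ K → y i < y K) :
    Tendsto (fun τ : ℝ => fun k => exp (y k / τ) / ∑ i, exp (y i / τ))
      (𝓝[>] 0) (𝓝 (fun i => if i = K then 1 else 0)) := by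
  have hshift : ∀ τ k, exp (y k / τ) / ∑ i, exp (y i / τ)
      = exp ((y k - y K) / τ) / ∑ i, exp ((y i - y K) / τ) := by
    intro τ k
    have hfactor : ∀ i, exp (y i / τ) = exp ((y i - y K) / τ) * exp (y K / τ) := fun i => by
      rw [← exp_add, ← add_div, sub_add_cancel]
    rw [hfactor k, Finset.sum_congr rfl fun i _ => hfactor i, ← Finset.sum_mul,
      mul_div_mul_right _ _ (exp_ne_zero _)]
  have hnum : ∀ k, Tendsto (fun τ : ℝ => exp ((y k - y K) / τ)) (𝓝[>] 0)
      (𝓝 (if k = K then 1 else 0)) := by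
    intro k
    by_cases hk : k = K
    · simp [hk]
    · simpa [hk] using tendsto_exp_div_nhdsGT_zero_of_neg (sub_neg.mpr (hK k hk))
  have hden : Tendsto (fun τ : ℝ => ∑ i, exp ((y i - y K) / τ)) (𝓝[>] 0) (𝓝 1) := by
    simpa using tendsto_finsetSum Finset.univ fun i _ => hnum i
  simp_rw [tendsto_pi_nhds, hshift]
  intro k
  have hlim := (hnum k).div hden one_ne_zero
  rw [div_one] at hlim
  exact hlim

lemma Function.Injective.exists_forall_lt_of_ne {ι β : Type*} [Finite ι] [Nonempty ι]
    [LinearOrder β] {y : ι → β} (hy : y.Injective) : ∃ K, ∀ i, i ≠ K → y i < y K := by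
  obtain ⟨K, hK⟩ := Finite.exists_max y
  exact ⟨K, fun i hi => (hK i).lt_of_ne (hy.ne hi)⟩

lemma ProbabilityTheory.cdf_map_eq {Ω : Type*} [MeasurableSpace Ω] {μ : Measure Ω}
    [IsProbabilityMeasure μ] {g : Ω → ℝ} (hg : Measurable g) {F : ℝ → ℝ} (hF : 0 ≤ F)
    (hcdf : ∀ x, μ {ω | g ω ≤ x} = ENNReal.ofReal (F x)) :
    cdf (μ.map g) = F := by
  have := Measure.isProbabilityMeasure_map (μ := μ) hg.aemeasurable
  ext x
  rw [← ENNReal.ofReal_eq_ofReal_iff (cdf_nonneg _ x) (hF x), ofReal_cdf,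
    Measure.map_apply hg measurableSet_Iic]
  exact hcdf x

lemma ProbabilityTheory.nullSingletonClass_of_continuous_cdf (μ : Measure ℝ)
    [IsProbabilityMeasure μ] (hcont : Continuous (cdf μ)) : NullSingletonClass μ where
  measure_singleton a := by
    rw [← measure_cdf μ, StieltjesFunction.measure_singleton,
      hcont.continuousWithinAt.leftLim_eq, sub_self, ENNReal.ofReal_zero]

lemma MeasureTheory.Measure.prod_diagonal_eq_zero {α : Type*} [MeasurableSpace α]
    [MeasurableEq α] (μ ν : Measure α) [SFinite ν] [NullSingletonClass ν] :
    μ.prod ν (Set.diagonal α) = 0 := by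
  rw [Measure.prod_apply measurableSet_diagonal]
  have hslice : ∀ x, Prod.mk x ⁻¹' Set.diagonal α = {x} := fun x => by
    ext y
    simp [eq_comm]
  simp [hslice]

lemma ProbabilityTheory.IndepFun.measure_eq_eq_zero {Ω α : Type*} [MeasurableSpace Ω]
    [MeasurableSpace α] [MeasurableEq α] {μ : Measure Ω} [IsFiniteMeasure μ]
    {g h : Ω → α} (hg : Measurable g) (hh : Measurable h) (hind : IndepFun g h μ)
    [NullSingletonClass (μ.map h)] : μ {ω | g ω = h ω} = 0 := by
  have hlaw := (indepFun_iff_map_prod_eq_prod_map_map hg.aemeasurable hh.aemeasurable).mp hind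
  calc μ {ω | g ω = h ω} = μ.map (fun ω => (g ω, h ω)) (Set.diagonal α) := by
        rw [Measure.map_apply (hg.prodMk hh) measurableSet_diagonal]; rfl
    _ = 0 := by rw [hlaw, Measure.prod_diagonal_eq_zero]

lemma MeasureTheory.ae_injective_of_measure_eq_eq_zero {Ω ι β : Type*} [MeasurableSpace Ω]
    [Countable ι] {μ : Measure Ω} (Y : ι → Ω → β)
    (h : ∀ i j, i ≠ j → μ {ω | Y i ω = Y j ω} = 0) :
    ∀ᵐ ω ∂μ, (fun i => Y i ω).Injective := by
  simp only [Function.Injective, ae_all_iff]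
  intro i j
  by_cases hij : i = j
  · exact Eventually.of_forall fun _ _ => hij
  · exact (measure_eq_zero_iff_ae_notMem.mp (h i j hij)).mono fun _ hω heq => absurd heq hω

theorem gumbel_softmax_objective_zero_temperature_general
    {Ω : Type*} [MeasureSpace Ω] [IsProbabilityMeasure (ℙ : Measure Ω)]
    (d : ℕ) (hd : 1 ≤ d)
    (α : Fin d → ℝ)
    (G : Fin d → Ω → ℝ)
    (hGmeas : ∀ i, Measurable (G i))
    (hGindep : iIndepFun (m := fun _ => Real.measurableSpace) G ℙ)
    (hGcdf : ∀ i x, ℙ {ω | G i ω ≤ x} = ENNReal.ofReal (Real.exp (-Real.exp (-x))))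
    (X : ℝ → Ω → Fin d → ℝ)
    (hX : ∀ τ ω k, X τ ω k =
      Real.exp ((Real.log (α k) + G k ω) / τ) /
        ∑ i, Real.exp ((Real.log (α i) + G i ω) / τ))
    (f : (Fin d → ℝ) → ℝ) (hf : Continuous f) :
    ℙ {ω | ∃! K : Fin d,
        (∀ i, i ≠ K → Real.log (α i) + G i ω < Real.log (α K) + G K ω) ∧
        Tendsto (fun τ => f (X τ ω)) (𝓝[>] 0)
          (𝓝 (f (fun i => if i = K then 1 else 0)))} = 1 := by
  have : Nonempty (Fin d) := ⟨⟨0, hd⟩⟩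
  have hatomless : ∀ j, NullSingletonClass (Measure.map (G j) ℙ) := fun j => by
    have := Measure.isProbabilityMeasure_map (μ := ℙ) (hGmeas j).aemeasurable
    refine nullSingletonClass_of_continuous_cdf _ ?_
    rw [cdf_map_eq (hGmeas j) (fun x => (exp_pos _).le) (hGcdf j)]
    fun_prop
  have hdistinct : ∀ᵐ ω, (fun i => log (α i) + G i ω).Injective := by
    refine ae_injective_of_measure_eq_eq_zero _ fun i j hij => ?_
    have hind : IndepFun (fun ω => G i ω + (log (α i) - log (α j))) (G j) ℙ :=
      (hGindep.indepFun hij).comp (measurable_add_const _) measurable_id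
    have := hatomless j
    have hshift : {ω | log (α i) + G i ω = log (α j) + G j ω}
        = {ω | G i ω + (log (α i) - log (α j)) = G j ω} := by
      ext ω
      simp only [Set.mem_ofPred_eq]
      constructor <;> intro h <;> linarith
    rw [hshift]
    exact hind.measure_eq_eq_zero ((hGmeas i).add_const _) (hGmeas j)
  refine (measure_congr (ae_eq_univ.mpr ?_)).trans measure_univ
  filter_upwards [hdistinct] with ω hω
  obtain ⟨K, hK⟩ := hω.exists_forall_lt_of_ne
  refine ⟨K, ⟨hK, ?_⟩, fun K' hK' => ?_⟩
  · refine (hf.tendsto _).comp ((tendsto_softmax_nhdsGT_zero _ K hK).congr fun τ => ?_)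
    exact (funext (hX τ ω)).symm
  · by_contra hne
    exact lt_asymm (hK K' hne) (hK'.1 K (Ne.symm hne))

/-- **Almost sure convergence of the Gumbel-Softmax reparameterized objective as
the temperature tends to zero.**
Let `α ∈ (0,∞)^d`, let `G 1, …, G d` be i.i.d. standard Gumbel random variables
(CDF `x ↦ exp (-exp (-x))`), and for each `τ > 0` let `X τ` be the concrete
random vector with coordinates
`X τ k = exp ((log (α k) + G k)/τ) / ∑ i, exp ((log (α i) + G i)/τ)`.
Let `f : ℝ^d → ℝ` be continuous.  Then almost surely there is a (necessarily
unique) index `K` strictly maximizing `log (α i) + G i`, and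
`f (X τ) → f (e K)` as `τ → 0⁺`, where `e K` is the one-hot vector at `K`
(i.e. the rounding of `X`). -/
theorem gumbel_softmax_objective_zero_temperature
    {Ω : Type*} [MeasureSpace Ω] [IsProbabilityMeasure (ℙ : Measure Ω)]
    (d : ℕ) (hd : 1 ≤ d)
    (α : Fin d → ℝ) (hα : ∀ i, 0 < α i)
    (G : Fin d → Ω → ℝ)
    (hGmeas : ∀ i, Measurable (G i))
    (hGindep : iIndepFun (m := fun _ => Real.measurableSpace) G ℙ)
    (hGcdf : ∀ i x, ℙ {ω | G i ω ≤ x} = ENNReal.ofReal (Real.exp (-Real.exp (-x))))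
    (X : ℝ → Ω → Fin d → ℝ)
    (hX : ∀ τ ω k, X τ ω k =
      Real.exp ((Real.log (α k) + G k ω) / τ) /
        ∑ i, Real.exp ((Real.log (α i) + G i ω) / τ))
    (f : (Fin d → ℝ) → ℝ) (hf : Continuous f) :
    ℙ {ω | ∃! K : Fin d,
        (∀ i, i ≠ K → Real.log (α i) + G i ω < Real.log (α K) + G K ω) ∧
        Tendsto (fun τ => f (X τ ω)) (𝓝[>] 0)
          (𝓝 (f (fun i => if i = K then 1 else 0)))} = 1 :=
  gumbel_softmax_objective_zero_temperature_general d hd α G hGmeas hGindep hGcdf X hX f hf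
end
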